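/- Counting interval summands by the persistence measure: suppose a persistence module V over ℝ is isomorphic to a direct sum ⊕_{ℓ∈L} I^{J_ℓ} of interval modules. Then for all extended reals −∞ ≤ a < b ≤ c < d ≤ +∞ with b and c finite, μ_V([a,b]×[c,d]) equals the cardinality (in {0,1,2,…} ∪ {∞}) of the set {ℓ ∈ L : [b,c] ⊆ J_ℓ ⊆ (a,d)} (here (a,d) denotes (−∞,d) when a = −∞ and (a,+∞) when d = +∞). -/

import Mathlib

attribute [local instance] Classical.propDecidable

structure PersMod (k : Type) [Field k] (T : Type) [Preorder T] where
  space : T → Type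
  [addCommGroup : ∀ t, AddCommGroup (space t)]
  [module : ∀ t, Module k (space t)]
  map : ∀ s t : T, s ≤ t → space s →ₗ[k] space t
  map_id : ∀ t, map t t le_rfl = LinearMap.id
  map_comp : ∀ r s t (h1 : r ≤ s) (h2 : s ≤ t),
    (map s t h2).comp (map r s h1) = map r t (h1.trans h2)

attribute [instance] PersMod.addCommGroup PersMod.module

def PersIso {k : Type} [Field k] {T : Type} [Preorder T] (U V : PersMod k T) : Prop :=
  ∃ e : ∀ t, U.space t ≃ₗ[k] V.space t,
    ∀ s t (h : s ≤ t),
      (e t).toLinearMap.comp (U.map s t h) = (V.map s t h).comp (e s).toLinearMap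

def IsIntervalSet {T : Type} [Preorder T] (J : Set T) : Prop :=
  J.Nonempty ∧ ∀ ⦃r s t : T⦄, r ∈ J → t ∈ J → r ≤ s → s ≤ t → s ∈ J

noncomputable def intervalModule (k : Type) [Field k] (T : Type) [Preorder T]
    (J : Set T) (hJ : IsIntervalSet J) : PersMod k T where
  space t := PLift (t ∈ J) → k
  addCommGroup := fun _ => inferInstance
  module := fun _ => inferInstance
  map s t _ :=
    { toFun := fun f _ => if hs : s ∈ J then f ⟨hs⟩ else 0
      map_add' := fun f g => by
        funext ht; by_cases hs : s ∈ J <;> simp [hs]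
      map_smul' := fun c f => by
        funext ht; by_cases hs : s ∈ J <;> simp [hs] }
  map_id t := by
    refine LinearMap.ext fun f => funext fun ht => ?_
    show (if hs : t ∈ J then f ⟨hs⟩ else 0) = f ht
    rw [dif_pos ht.down]
  map_comp r s t h1 h2 := by
    refine LinearMap.ext fun f => funext fun ht => ?_
    show (if hs : s ∈ J then (if hr : r ∈ J then f ⟨hr⟩ else 0) else 0)
        = (if hr : r ∈ J then f ⟨hr⟩ else 0)
    by_cases hr : r ∈ J
    · have hs : s ∈ J := hJ.2 hr ht.down h1 h2
      simp [hr, hs]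
    · by_cases hs : s ∈ J <;> simp [hr, hs]

noncomputable def dsum {k : Type} [Field k] {T : Type} [Preorder T] {L : Type}
    (V : L → PersMod k T) : PersMod k T where
  space t := DFinsupp (fun ℓ => (V ℓ).space t)
  addCommGroup := fun _ => inferInstance
  module := fun _ => inferInstance
  map s t h := DFinsupp.mapRange.linearMap (fun ℓ => (V ℓ).map s t h)
  map_id t := by
    show DFinsupp.mapRange.linearMap (fun ℓ => (V ℓ).map t t le_rfl) = LinearMap.id
    have : (fun ℓ => (V ℓ).map t t le_rfl)
        = fun ℓ => (LinearMap.id : (V ℓ).space t →ₗ[k] (V ℓ).space t) :=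
      funext fun ℓ => (V ℓ).map_id t
    rw [this]
    exact DFinsupp.mapRange.linearMap_id
  map_comp r s t h1 h2 := by
    show (DFinsupp.mapRange.linearMap (fun ℓ => (V ℓ).map s t h2)).comp
        (DFinsupp.mapRange.linearMap (fun ℓ => (V ℓ).map r s h1))
      = DFinsupp.mapRange.linearMap (fun ℓ => (V ℓ).map r t (h1.trans h2))
    rw [← DFinsupp.mapRange.linearMap_comp]
    congr 1
    funext ℓ
    exact (V ℓ).map_comp r s t h1 h2

open scoped ENNReal

section Dim

noncomputable def edim (k : Type) [Field k] (M : Type) [AddCommGroup M] [Module k M] : ℕ∞ :=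
  Cardinal.toENat (Module.rank k M)

noncomputable def erank {k : Type} [Field k] {M N : Type} [AddCommGroup M] [Module k M]
    [AddCommGroup N] [Module k N] (f : M →ₗ[k] N) : ℕ∞ :=
  edim k (LinearMap.range f)

noncomputable def ecard (S : Type) : ℕ∞ := Cardinal.toENat (Cardinal.mk S)

end Dim

section Matchings

noncomputable def eDiff (x y : EReal) : ℝ≥0∞ :=
  if x = y then 0
  else if x = ⊤ ∨ x = ⊥ ∨ y = ⊤ ∨ y = ⊥ then ⊤
  else ENNReal.ofReal |x.toReal - y.toReal|

noncomputable def dPt (α β : EReal × EReal) : ℝ≥0∞ :=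
  max (eDiff α.1 β.1) (eDiff α.2 β.2)

noncomputable def diagDist (α : EReal × EReal) : ℝ≥0∞ :=
  if α.1 = ⊥ ∨ α.2 = ⊤ then ⊤ else ENNReal.ofReal ((α.2.toReal - α.1.toReal) / 2)

def IsMatching {α β : Type} (M : Set (α × β)) : Prop :=
  (∀ a b b', (a, b) ∈ M → (a, b') ∈ M → b = b') ∧
  (∀ a a' b, (a, b) ∈ M → (a', b) ∈ M → a = a')

def IsDeltaMatching {α β : Type} (A : α → EReal × EReal) (B : β → EReal × EReal)
    (δ : ℝ≥0∞) : Prop :=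
  ∃ M : Set (α × β), IsMatching M ∧
    (∀ p ∈ M, dPt (A p.1) (B p.2) ≤ δ) ∧
    (∀ a, (∀ b, (a, b) ∉ M) → diagDist (A a) ≤ δ) ∧
    (∀ b, (∀ a, (a, b) ∉ M) → diagDist (B b) ≤ δ)

noncomputable def dBottle {α β : Type} (A : α → EReal × EReal) (B : β → EReal × EReal) : ℝ≥0∞ :=
  sInf {d : ℝ≥0∞ | ∃ δ : ℝ, 0 ≤ δ ∧ IsDeltaMatching A B (ENNReal.ofReal δ) ∧ d = ENNReal.ofReal δ}

end Matchings

section Measure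

noncomputable def persIm {k : Type} [Field k] (V : PersMod k ℝ) (a : EReal) (c : ℝ) :
    Submodule k (V.space c) :=
  if h : ∃ a' : ℝ, a = (a' : EReal) ∧ a' ≤ c then
    LinearMap.range (V.map h.choose c h.choose_spec.2)
  else ⊥

noncomputable def persKer {k : Type} [Field k] (V : PersMod k ℝ) (c : ℝ) (d : EReal) :
    Submodule k (V.space c) :=
  if h : ∃ d' : ℝ, d = (d' : EReal) ∧ c ≤ d' then
    LinearMap.ker (V.map c h.choose h.choose_spec.2)
  else ⊤

noncomputable def persMeasure {k : Type} [Field k] (V : PersMod k ℝ)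
    (a : EReal) (b c : ℝ) (d : EReal) : ℕ∞ :=
  edim k
    (↥(persIm V (b : EReal) c ⊓ persKer V c d) ⧸
      Submodule.comap (persIm V (b : EReal) c ⊓ persKer V c d).subtype
        (persIm V a c ⊓ persKer V c d))

end Measure

section Interleaving

def Interleaved (k : Type) [Field k] (U V : PersMod k ℝ) (δ : ℝ) : Prop :=
  ∃ (φ : ∀ t : ℝ, U.space t →ₗ[k] V.space (t + δ))
    (ψ : ∀ t : ℝ, V.space t →ₗ[k] U.space (t + δ)),
    (∀ s t (h : s ≤ t),
      (φ t).comp (U.map s t h) = (V.map (s + δ) (t + δ) (by linarith)).comp (φ s)) ∧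
    (∀ s t (h : s ≤ t),
      (ψ t).comp (V.map s t h) = (U.map (s + δ) (t + δ) (by linarith)).comp (ψ s)) ∧
    (∀ t (h : t ≤ t + δ + δ), (ψ (t + δ)).comp (φ t) = U.map t (t + δ + δ) h) ∧
    (∀ t (h : t ≤ t + δ + δ), (φ (t + δ)).comp (ψ t) = V.map t (t + δ + δ) h)

noncomputable def dInter (k : Type) [Field k] (U V : PersMod k ℝ) : ℝ≥0∞ :=
  sInf {d : ℝ≥0∞ | ∃ δ : ℝ, 0 ≤ δ ∧ Interleaved k U V δ ∧ d = ENNReal.ofReal δ}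

def QTame (k : Type) [Field k] (V : PersMod k ℝ) : Prop :=
  ∀ s t : ℝ, ∀ h : s < t, erank (V.map s t h.le) ≠ ⊤

def LocFinitePM (k : Type) [Field k] (W : PersMod k ℝ) : Prop :=
  ∃ (L : Type) (J : L → Set ℝ) (hJ : ∀ ℓ, IsIntervalSet (J ℓ)),
    PersIso W (dsum fun ℓ => intervalModule k ℝ (J ℓ) (hJ ℓ)) ∧
    ∀ S : Set ℝ, Bornology.IsBounded S → {ℓ : L | (J ℓ ∩ S).Nonempty}.Finite

noncomputable def zeroPers (k : Type) [Field k] : PersMod k ℝ where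
  space _ := PUnit
  addCommGroup := fun _ => inferInstance
  module := fun _ => inferInstance
  map _ _ _ := 0
  map_id t := LinearMap.ext fun x => Subsingleton.elim _ _
  map_comp r s t h1 h2 := LinearMap.ext fun x => Subsingleton.elim _ _

noncomputable def smoothing {k : Type} [Field k] (V : PersMod k ℝ) (ε : ℝ) (hε : 0 < ε) :
    PersMod k ℝ where
  space t := LinearMap.range (V.map (t - ε) (t + ε) (by linarith))
  addCommGroup := fun _ => inferInstance
  module := fun _ => inferInstance
  map s t h := LinearMap.restrict (V.map (s + ε) (t + ε) (by linarith))
    (p := LinearMap.range (V.map (s - ε) (s + ε) (by linarith)))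
    (q := LinearMap.range (V.map (t - ε) (t + ε) (by linarith)))
    (by
      rintro x ⟨y, rfl⟩
      refine ⟨V.map (s - ε) (t - ε) (by linarith) y, ?_⟩
      have h1 := LinearMap.congr_fun
        (V.map_comp (s - ε) (t - ε) (t + ε) (by linarith) (by linarith)) y
      have h2 := LinearMap.congr_fun
        (V.map_comp (s - ε) (s + ε) (t + ε) (by linarith) (by linarith)) y
      simp only [LinearMap.comp_apply] at h1 h2
      rw [h1, h2])
  map_id t := by
    refine LinearMap.ext fun x => Subtype.ext ?_
    have := LinearMap.congr_fun (V.map_id (t + ε)) x.1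
    simpa [LinearMap.restrict_apply] using this
  map_comp r s t h1 h2 := by
    refine LinearMap.ext fun x => Subtype.ext ?_
    have := LinearMap.congr_fun
      (V.map_comp (r + ε) (s + ε) (t + ε) (by linarith) (by linarith)) x.1
    simpa [LinearMap.restrict_apply] using this

end Interleaving

section Webb

def webbSubmodule (k : Type) [Field k] (t : ℤ) : Submodule k (ℕ → k) where
  carrier := {x | ∀ i : ℕ, (i : ℤ) < -t → x i = 0}
  add_mem' := by
    intro x y hx hy i hi
    simp [Pi.add_apply, hx i hi, hy i hi]
  zero_mem' := by
    intro i hi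
    rfl
  smul_mem' := by
    intro c x hx i hi
    simp [Pi.smul_apply, hx i hi]

noncomputable def webbModule (k : Type) [Field k] : PersMod k ↥{n : ℤ | n ≤ 0} where
  space t := ↥(webbSubmodule k t.1)
  addCommGroup := fun _ => inferInstance
  module := fun _ => inferInstance
  map s t h := Submodule.inclusion (by
    intro x hx
    have hx' : ∀ i : ℕ, (i : ℤ) < -s.1 → x i = 0 := hx
    intro i hi
    exact hx' i (lt_of_lt_of_le hi (neg_le_neg h)))
  map_id t := LinearMap.ext fun x => rfl
  map_comp r s t h1 h2 := LinearMap.ext fun x => rfl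

end Webb

section Decorated

/-- `decMem t x` : the real number `t` belongs to the interval described by the
decorated pair `x = ((p, εp), (q, εq))`, where the decoration `false` means `⁻`
and `true` means `⁺`. -/
def decMem (t : ℝ) (x : (EReal × Bool) × (EReal × Bool)) : Prop :=
  (x.1.1 < (t : EReal) ∨ (x.1.1 = (t : EReal) ∧ x.1.2 = false)) ∧
  ((t : EReal) < x.2.1 ∨ ((t : EReal) = x.2.1 ∧ x.2.2 = true))

/-- A valid decorated pair: the left coordinate is `p⁻`/`p⁺` for a real `p` or `−∞⁺`,
the right coordinate is `q⁻`/`q⁺` for a real `q` or `+∞⁻`, and the corresponding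
interval is nonempty (i.e. `p* < q*`). -/
def ValidDec (x : (EReal × Bool) × (EReal × Bool)) : Prop :=
  (x.1.1 = ⊥ → x.1.2 = true) ∧ x.1.1 ≠ ⊤ ∧ (x.2.1 = ⊤ → x.2.2 = false) ∧ x.2.1 ≠ ⊥ ∧
  {t : ℝ | decMem t x}.Nonempty

/-- The decorated pair `x` belongs to the rectangle `[a,b] × [c,d]`, i.e.
`[b,c] ⊆ ⟨p*,q*⟩ ⊆ (a,d)`. -/
def decInRect (x : (EReal × Bool) × (EReal × Bool)) (a : EReal) (b c : ℝ) (d : EReal) : Prop :=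
  (∀ t ∈ Set.Icc b c, decMem t x) ∧
  (∀ t : ℝ, decMem t x → a < (t : EReal) ∧ (t : EReal) < d)

/-- `Dgm` is (a labelling of) the decorated persistence diagram of `V`. -/
def IsDgmOf {k : Type} [Field k] (V : PersMod k ℝ) {ι : Type}
    (Dgm : ι → (EReal × Bool) × (EReal × Bool)) : Prop :=
  (∀ i, ValidDec (Dgm i)) ∧
  ∀ (a : EReal) (b c : ℝ) (d : EReal), a < (b : EReal) → b ≤ c → (c : EReal) < d →
    persMeasure V a b c d = ecard {i : ι // decInRect (Dgm i) a b c d}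

end Decorated

section RMeasure

/-- `[a,b] × [c,d]` is a (nondegenerate) rectangle contained in `D`. -/
def RectIn (D : Set (ℝ × ℝ)) (a b c d : ℝ) : Prop :=
  a < b ∧ c < d ∧ Set.Icc a b ×ˢ Set.Icc c d ⊆ D

/-- An r-measure on `D`: additivity under horizontal and vertical splitting. -/
def IsRMeasure (D : Set (ℝ × ℝ)) (μ : ℝ → ℝ → ℝ → ℝ → ℕ∞) : Prop :=
  (∀ a p b c d, a < p → p < b → RectIn D a b c d → μ a b c d = μ a p c d + μ p b c d) ∧
  (∀ a b c q d, c < q → q < d → RectIn D a b c d → μ a b c d = μ a b c q + μ a b q d)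

/-- Membership of a decorated point of the plane (`Bool` decoration: `true` = `⁺`,
`false` = `⁻`) in the closed rectangle `[a,b] × [c,d]`. -/
def dptMem (x : (ℝ × Bool) × (ℝ × Bool)) (a b c d : ℝ) : Prop :=
  a ≤ x.1.1 ∧ x.1.1 ≤ b ∧ c ≤ x.2.1 ∧ x.2.1 ≤ d ∧
  (x.1.1 = a → x.1.2 = true) ∧ (x.1.1 = b → x.1.2 = false) ∧
  (x.2.1 = c → x.2.2 = true) ∧ (x.2.1 = d → x.2.2 = false)

/-- The r-interior `D•` of `D`: decorated points contained in some rectangle of `D`. -/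
def rInt (D : Set (ℝ × ℝ)) : Set ((ℝ × Bool) × (ℝ × Bool)) :=
  {x | ∃ a b c d, RectIn D a b c d ∧ dptMem x a b c d}

/-- The number of decorated points, counted with multiplicity `m`, lying in the
rectangle `[a,b] × [c,d]`. -/
noncomputable def dcount (m : (ℝ × Bool) × (ℝ × Bool) → ℕ) (a b c d : ℝ) : ℕ∞ :=
  ecard (Σ x : {x : (ℝ × Bool) × (ℝ × Bool) // dptMem x a b c d}, Fin (m x.1))

end RMeasure


/-! The persistence measure is invariant under isomorphism, so we may take `V = ⊕ I^{J ℓ}`.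
In a direct sum of interval modules the images and kernels of the structure maps are coordinate
subspaces: `im v_s^c` is spanned by the summands with `s ∈ J ℓ` and `ker v_c^d` by those with
`d ∉ J ℓ`. The subquotient defining `μ_V` is therefore the direct sum of the lines
`I_c^{J ℓ} = k` over the `ℓ` with `b, c ∈ J ℓ` and `a, d ∉ J ℓ`; for an interval `J ℓ` this
says `[b,c] ⊆ J ℓ ⊆ (a,d)`. -/

namespace DFinsupp

variable {R ι : Type*} {M N : ι → Type*}

section Semiring

variable [Semiring R] [∀ i, AddCommMonoid (M i)] [∀ i, Module R (M i)]
  [∀ i, AddCommMonoid (N i)] [∀ i, Module R (N i)]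

variable (R M) in
def supported (s : Set ι) : Submodule R (Π₀ i, M i) where
  carrier := {x | ∀ i ∉ s, x i = 0}
  add_mem' hx hy i hi := by rw [add_apply, hx i hi, hy i hi, add_zero]
  zero_mem' _ _ := rfl
  smul_mem' r x hx i hi := by rw [smul_apply, hx i hi, smul_zero]

theorem mem_supported {s : Set ι} {x : Π₀ i, M i} :
    x ∈ supported R M s ↔ ∀ i ∉ s, x i = 0 :=
  Iff.rfl

theorem supported_inf (s t : Set ι) :
    supported R M s ⊓ supported R M t = supported R M (s ∩ t) := by
  ext x
  simp only [Submodule.mem_inf, mem_supported, Set.mem_inter_iff, not_and_or]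
  exact ⟨fun h i hi => hi.elim (h.1 i) (h.2 i), fun h => ⟨fun i hi => h i (.inl hi),
    fun i hi => h i (.inr hi)⟩⟩

theorem supported_empty : supported R M ∅ = ⊥ :=
  eq_bot_iff.2 fun _ hx => (Submodule.mem_bot R).2 <| ext fun i => hx i (Set.notMem_empty i)

theorem supported_univ : supported R M Set.univ = ⊤ :=
  eq_top_iff.2 fun _ _ i hi => absurd (Set.mem_univ i) hi

def extendByZero (s : Set ι) [DecidablePred (· ∈ s)] (y : Π₀ i : s, M i) : Π₀ i, M i where
  toFun i := if h : i ∈ s then y ⟨i, h⟩ else 0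
  support' := y.support'.map fun t => ⟨t.1.map Subtype.val, fun i => by
    by_cases h : i ∈ s
    · exact (t.2 ⟨i, h⟩).imp (Multiset.mem_map_of_mem _) (by simp [h])
    · exact .inr (dif_neg h)⟩

theorem extendByZero_apply (s : Set ι) [DecidablePred (· ∈ s)] (y : Π₀ i : s, M i) (i : ι) :
    extendByZero s y i = if h : i ∈ s then y ⟨i, h⟩ else 0 :=
  rfl

theorem range_mapRange_linearMap {f : ∀ i, M i →ₗ[R] N i} (s : Set ι)
    (hsurj : ∀ i ∈ s, Function.Surjective (f i)) (hzero : ∀ i ∉ s, f i = 0) :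
    LinearMap.range (mapRange.linearMap f) = supported R N s := by
  ext x
  constructor
  · rintro ⟨y, rfl⟩ i hi
    simp [hzero i hi]
  · intro hx
    -- `surjInv` need not send `0` to `0`, which `mapRange` requires
    let g : ∀ i, N i → M i := fun i z =>
      if h : i ∈ s ∧ z ≠ 0 then Function.surjInv (hsurj i h.1) z else 0
    refine ⟨mapRange g (fun i => dif_neg fun h => h.2 rfl) x, ext fun i => ?_⟩
    simp only [mapRange.linearMap_apply, mapRange_apply, g]
    split_ifs with h
    · exact Function.surjInv_eq _ _
    · rw [map_zero]
      by_cases hi : i ∈ s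
      · exact (not_not.1 fun hne => h ⟨hi, hne⟩).symm
      · exact (hx i hi).symm

theorem ker_mapRange_linearMap {f : ∀ i, M i →ₗ[R] N i} (s : Set ι)
    (hzero : ∀ i ∈ s, f i = 0) (hinj : ∀ i ∉ s, Function.Injective (f i)) :
    LinearMap.ker (mapRange.linearMap f) = supported R M s := by
  ext x
  simp only [LinearMap.mem_ker, mem_supported]
  constructor
  · intro hx i hi
    exact hinj i hi ((DFunLike.congr_fun hx i).trans (map_zero (f i)).symm)
  · intro hx
    ext i
    by_cases hi : i ∈ s
    · simp [hzero i hi]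
    · simp [hx i hi]

end Semiring

variable [Ring R] [∀ i, AddCommGroup (M i)] [∀ i, Module R (M i)]

theorem subtypeDomain_extendByZero (s : Set ι) [DecidablePred (· ∈ s)] (y : Π₀ i : s, M i) :
    (extendByZero s y).subtypeDomain (· ∈ s) = y :=
  ext fun i => by simp [extendByZero_apply]

noncomputable def supportedQuotientEquiv (s t : Set ι) :
    (supported R M s ⧸ (supported R M t).comap (supported R M s).subtype) ≃ₗ[R]
      Π₀ i : ↥(s \ t), M i := by
  let φ := (subtypeDomainLinearMap R M (· ∈ s \ t)).comp (supported R M s).subtype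
  have hsurj : Function.Surjective φ := fun y =>
    ⟨⟨extendByZero (s \ t) y, fun i hi => dif_neg fun h => hi h.1⟩,
      subtypeDomain_extendByZero _ y⟩
  have hker : LinearMap.ker φ = (supported R M t).comap (supported R M s).subtype := by
    ext ⟨x, hx⟩
    simp only [LinearMap.mem_ker, Submodule.mem_comap, Submodule.coe_subtype, mem_supported]
    constructor
    · intro h i hi
      by_cases his : i ∈ s
      · exact DFunLike.congr_fun h ⟨i, his, hi⟩
      · exact hx i his
    · intro h
      exact ext fun i => h i i.2.2
  exact (Submodule.quotEquivOfEq _ _ hker.symm).trans (φ.quotKerEquivOfSurjective hsurj)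

end DFinsupp

theorem edim_congr {k : Type} [Field k] {M N : Type} [AddCommGroup M] [Module k M]
    [AddCommGroup N] [Module k N] (e : M ≃ₗ[k] N) : edim k M = edim k N := by
  rw [edim, edim, e.rank_eq]

theorem ecard_congr {A B : Type} (e : A ≃ B) : ecard A = ecard B := by
  rw [ecard, ecard, Cardinal.mk_congr e]

theorem edim_subquotient_map_equiv {k : Type} [Field k] {M N : Type} [AddCommGroup M]
    [Module k M] [AddCommGroup N] [Module k N] (e : M ≃ₗ[k] N) (P Q : Submodule k M) :
    edim k (P ⧸ Q.comap P.subtype) =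
      edim k (P.map (e : M →ₗ[k] N) ⧸
        (Q.map (e : M →ₗ[k] N)).comap (P.map (e : M →ₗ[k] N)).subtype) := by
  refine edim_congr (Submodule.Quotient.equiv _ _ (e.submoduleMap P) ?_)
  ext ⟨y, x, hxP, rfl⟩
  simp

section PersMod

variable {k : Type} [Field k]

theorem persIm_coe (V : PersMod k ℝ) {b c : ℝ} (h : b ≤ c) :
    persIm V b c = LinearMap.range (V.map b c h) := by
  have hex : ∃ b' : ℝ, (b : EReal) = b' ∧ b' ≤ c := ⟨b, rfl, h⟩
  have key : ∀ (b' : ℝ) (h' : b' ≤ c), b' = b →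
      LinearMap.range (V.map b' c h') = LinearMap.range (V.map b c h) := by
    rintro b' h' rfl
    rfl
  rw [persIm, dif_pos hex]
  exact key _ _ (EReal.coe_injective hex.choose_spec.1).symm

theorem persIm_bot (V : PersMod k ℝ) (c : ℝ) : persIm V ⊥ c = ⊥ :=
  dif_neg fun ⟨_, h, _⟩ => EReal.bot_ne_coe _ h

theorem persKer_coe (V : PersMod k ℝ) {c d : ℝ} (h : c ≤ d) :
    persKer V c d = LinearMap.ker (V.map c d h) := by
  have hex : ∃ d' : ℝ, (d : EReal) = d' ∧ c ≤ d' := ⟨d, rfl, h⟩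
  have key : ∀ (d' : ℝ) (h' : c ≤ d'), d' = d →
      LinearMap.ker (V.map c d' h') = LinearMap.ker (V.map c d h) := by
    rintro d' h' rfl
    rfl
  rw [persKer, dif_pos hex]
  exact key _ _ (EReal.coe_injective hex.choose_spec.1).symm

theorem persKer_top (V : PersMod k ℝ) (c : ℝ) : persKer V c ⊤ = ⊤ :=
  dif_neg fun ⟨_, h, _⟩ => EReal.top_ne_coe _ h

end PersMod

section Iso

variable {k : Type} [Field k] {U V : PersMod k ℝ} (e : ∀ t, U.space t ≃ₗ[k] V.space t)

theorem map_persIm_of_iso (he : ∀ s t (h : s ≤ t),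
      (e t).toLinearMap.comp (U.map s t h) = (V.map s t h).comp (e s).toLinearMap)
    (a : EReal) (c : ℝ) :
    (persIm U a c).map (e c : U.space c →ₗ[k] V.space c) = persIm V a c := by
  unfold persIm
  split_ifs
  · rw [← LinearMap.range_comp, he, LinearMap.range_comp, LinearEquiv.range, Submodule.map_top]
  · exact Submodule.map_bot _

theorem map_persKer_of_iso (he : ∀ s t (h : s ≤ t),
      (e t).toLinearMap.comp (U.map s t h) = (V.map s t h).comp (e s).toLinearMap)
    (c : ℝ) (d : EReal) :
    (persKer U c d).map (e c : U.space c →ₗ[k] V.space c) = persKer V c d := by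
  unfold persKer
  split_ifs
  · rw [← LinearEquiv.ker_comp (e _), he, LinearMap.ker_comp]
    exact Submodule.map_comap_eq_of_surjective (e c).surjective _
  · rw [Submodule.map_top, LinearEquiv.range]

end Iso

theorem PersIso.persMeasure_eq {k : Type} [Field k] {U V : PersMod k ℝ} (h : PersIso U V)
    (a : EReal) (b c : ℝ) (d : EReal) : persMeasure U a b c d = persMeasure V a b c d := by
  obtain ⟨e, he⟩ := h
  rw [persMeasure, persMeasure, edim_subquotient_map_equiv (e c),
    Submodule.map_inf _ (e c).injective, Submodule.map_inf _ (e c).injective,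
    map_persIm_of_iso e he, map_persIm_of_iso e he, map_persKer_of_iso e he]

section IntervalModule

variable {k : Type} [Field k] {T : Type} [Preorder T] {J : Set T} {hJ : IsIntervalSet J}
  {s t : T} (h : s ≤ t)

theorem intervalModule_map_surjective (hs : s ∈ J) :
    Function.Surjective ((intervalModule k T J hJ).map s t h) := fun g =>
  ⟨fun _ => if ht : t ∈ J then g ⟨ht⟩ else 0, funext fun ht =>
    (dif_pos hs).trans (dif_pos ht.down)⟩

theorem intervalModule_map_injective (ht : t ∈ J) :
    Function.Injective ((intervalModule k T J hJ).map s t h) := fun _ _ hfg =>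
  funext fun hs => (dif_pos hs.down).symm.trans ((congr_fun hfg ⟨ht⟩).trans (dif_pos hs.down))

theorem intervalModule_map_eq_zero_of_notMem_left (hs : s ∉ J) :
    (intervalModule k T J hJ).map s t h = 0 :=
  LinearMap.ext fun _ => funext fun _ => dif_neg hs

theorem intervalModule_map_eq_zero_of_notMem_right (ht : t ∉ J) :
    (intervalModule k T J hJ).map s t h = 0 :=
  LinearMap.ext fun _ => funext fun h => absurd h.down ht

end IntervalModule

section DirectSum

variable {k : Type} [Field k] {T : Type} [Preorder T] {L : Type} {J : L → Set T}
  {hJ : ∀ ℓ, IsIntervalSet (J ℓ)} {s t : T} (h : s ≤ t)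

theorem range_dsum_intervalModule_map :
    LinearMap.range ((dsum fun ℓ => intervalModule k T (J ℓ) (hJ ℓ)).map s t h) =
      DFinsupp.supported k _ {ℓ | s ∈ J ℓ} :=
  DFinsupp.range_mapRange_linearMap _ (fun _ hs => intervalModule_map_surjective h hs)
    (fun _ hs => intervalModule_map_eq_zero_of_notMem_left h hs)

theorem ker_dsum_intervalModule_map :
    LinearMap.ker ((dsum fun ℓ => intervalModule k T (J ℓ) (hJ ℓ)).map s t h) =
      DFinsupp.supported k _ {ℓ | t ∉ J ℓ} :=
  DFinsupp.ker_mapRange_linearMap _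
    (fun _ ht => intervalModule_map_eq_zero_of_notMem_right h ht)
    (fun _ ht => intervalModule_map_injective h (not_not.1 ht))

end DirectSum

theorem edim_dsum_intervalModule_space {k : Type} [Field k] {T : Type} [Preorder T] {ι : Type}
    (J : ι → Set T) (hJ : ∀ i, IsIntervalSet (J i)) (t : T) :
    edim k (Π₀ i, (intervalModule k T (J i) (hJ i)).space t) = ecard {i // t ∈ J i} := by
  have hrank : Module.rank k (Π₀ i, (PLift (t ∈ J i) → k)) = Cardinal.mk {i // t ∈ J i} := by
    calc Module.rank k (Π₀ i, (PLift (t ∈ J i) → k))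
        = Cardinal.sum fun i => Module.rank k (PLift (t ∈ J i) → k) :=
          rank_directSum k fun i => PLift (t ∈ J i) → k
      _ = Cardinal.sum fun i => Cardinal.mk (PLift (t ∈ J i)) := by simp
      _ = Cardinal.mk {i // t ∈ J i} := by
        rw [← Cardinal.mk_sigma, Cardinal.mk_congr (Equiv.sigmaPLiftEquivSubtype _)]
  exact congrArg Cardinal.toENat hrank

theorem IsIntervalSet.ordConnected {J : Set ℝ} (hJ : IsIntervalSet J) : J.OrdConnected :=
  ⟨fun _ hx _ hy _ hz => hJ.2 hx hy hz.1 hz.2⟩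

namespace Set.OrdConnected

variable {J : Set ℝ}

theorem lt_coe_of_notMem_image (hJ : J.OrdConnected) {a : EReal} {b x : ℝ} (hb : b ∈ J)
    (hab : a < b) (ha : a ∉ ((↑) : ℝ → EReal) '' J) (hx : x ∈ J) : a < x := by
  induction a using EReal.rec with
  | bot => exact EReal.bot_lt_coe x
  | top => exact absurd hab not_top_lt
  | coe a =>
    refine EReal.coe_lt_coe_iff.2 (lt_of_not_ge fun hxa => ha ⟨a, ?_, rfl⟩)
    exact hJ.out hx hb ⟨hxa, (EReal.coe_lt_coe_iff.1 hab).le⟩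

theorem coe_lt_of_notMem_image (hJ : J.OrdConnected) {d : EReal} {c x : ℝ} (hc : c ∈ J)
    (hcd : c < d) (hd : d ∉ ((↑) : ℝ → EReal) '' J) (hx : x ∈ J) : x < d := by
  induction d using EReal.rec with
  | bot => exact absurd hcd not_lt_bot
  | top => exact EReal.coe_lt_top x
  | coe d =>
    refine EReal.coe_lt_coe_iff.2 (lt_of_not_ge fun hdx => hd ⟨d, ?_, rfl⟩)
    exact hJ.out hc hx ⟨(EReal.coe_lt_coe_iff.1 hcd).le, hdx⟩

theorem Icc_subset_and_forall_mem_iff (hJ : J.OrdConnected) {a d : EReal} {b c : ℝ}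
    (hab : a < b) (hbc : b ≤ c) (hcd : c < d) :
    (Icc b c ⊆ J ∧ ∀ x ∈ J, a < x ∧ x < d) ↔
      b ∈ J ∧ c ∈ J ∧ a ∉ ((↑) : ℝ → EReal) '' J ∧ d ∉ ((↑) : ℝ → EReal) '' J := by
  constructor
  · rintro ⟨hbcJ, hJad⟩
    exact ⟨hbcJ ⟨le_rfl, hbc⟩, hbcJ ⟨hbc, le_rfl⟩,
      fun ⟨x, hx, hxa⟩ => (hJad x hx).1.ne' hxa, fun ⟨x, hx, hxd⟩ => (hJad x hx).2.ne hxd⟩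
  · rintro ⟨hb, hc, ha, hd⟩
    exact ⟨hJ.out hb hc, fun x hx =>
      ⟨hJ.lt_coe_of_notMem_image hb hab ha hx, hJ.coe_lt_of_notMem_image hc hcd hd hx⟩⟩

end Set.OrdConnected

section IntervalDecomposition

variable {k : Type} [Field k] {L : Type} {J : L → Set ℝ} {hJ : ∀ ℓ, IsIntervalSet (J ℓ)}

theorem persIm_dsum_intervalModule {a : EReal} {c : ℝ} (hac : a ≤ c) :
    persIm (dsum fun ℓ => intervalModule k ℝ (J ℓ) (hJ ℓ)) a c =
      DFinsupp.supported k _ {ℓ | a ∈ ((↑) : ℝ → EReal) '' J ℓ} := by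
  induction a using EReal.rec with
  | bot =>
    have hempty : {ℓ | (⊥ : EReal) ∈ ((↑) : ℝ → EReal) '' J ℓ} = ∅ := by ext; simp
    rw [persIm_bot, hempty]
    exact DFinsupp.supported_empty.symm
  | top => exact absurd hac (not_le.2 (EReal.coe_lt_top c))
  | coe a =>
    rw [persIm_coe _ (EReal.coe_le_coe_iff.1 hac), range_dsum_intervalModule_map]
    simp only [EReal.coe_injective.mem_set_image]
    -- the sides differ only in the (defeq) module instances on `(dsum _).space c`
    rfl

theorem persKer_dsum_intervalModule {c : ℝ} {d : EReal} (hcd : c ≤ d) :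
    persKer (dsum fun ℓ => intervalModule k ℝ (J ℓ) (hJ ℓ)) c d =
      DFinsupp.supported k _ {ℓ | d ∉ ((↑) : ℝ → EReal) '' J ℓ} := by
  induction d using EReal.rec with
  | bot => exact absurd hcd (not_le.2 (EReal.bot_lt_coe c))
  | top =>
    have huniv : {ℓ | (⊤ : EReal) ∉ ((↑) : ℝ → EReal) '' J ℓ} = Set.univ := by ext; simp
    rw [persKer_top, huniv]
    exact DFinsupp.supported_univ.symm
  | coe d =>
    rw [persKer_coe _ (EReal.coe_le_coe_iff.1 hcd), ker_dsum_intervalModule_map]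
    simp only [EReal.coe_injective.mem_set_image]
    rfl

theorem persMeasure_dsum_intervalModule {a : EReal} {b c : ℝ} {d : EReal} (hab : a < b)
    (hbc : b ≤ c) (hcd : c < d) :
    persMeasure (dsum fun ℓ => intervalModule k ℝ (J ℓ) (hJ ℓ)) a b c d =
      ecard {ℓ : L // Set.Icc b c ⊆ J ℓ ∧ ∀ x ∈ J ℓ, a < (x : EReal) ∧ (x : EReal) < d} := by
  have hbc' : (b : EReal) ≤ c := EReal.coe_le_coe_iff.2 hbc
  have hsupp : ∀ x : EReal, x ≤ c →
      persIm (dsum fun ℓ => intervalModule k ℝ (J ℓ) (hJ ℓ)) x c ⊓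
          persKer (dsum fun ℓ => intervalModule k ℝ (J ℓ) (hJ ℓ)) c d =
        DFinsupp.supported k _
          ({ℓ | x ∈ ((↑) : ℝ → EReal) '' J ℓ} ∩ {ℓ | d ∉ ((↑) : ℝ → EReal) '' J ℓ}) := by
    intro x hx
    rw [persIm_dsum_intervalModule hx, persKer_dsum_intervalModule hcd.le]
    exact DFinsupp.supported_inf _ _
  rw [persMeasure, hsupp b hbc', hsupp a (hab.le.trans hbc')]
  refine (edim_congr (DFinsupp.supportedQuotientEquiv _ _)).trans ?_
  rw [edim_dsum_intervalModule_space]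
  refine ecard_congr ((Equiv.subtypeSubtypeEquivSubtypeInter (· ∈ _) (c ∈ J ·)).trans
    (Equiv.subtypeEquivRight fun ℓ => ?_))
  rw [(hJ ℓ).ordConnected.Icc_subset_and_forall_mem_iff hab hbc hcd]
  simp only [Set.mem_sdiff, Set.mem_inter_iff, Set.mem_ofPred_eq,
    EReal.coe_injective.mem_set_image]
  tauto

end IntervalDecomposition

theorem stmt7 {k : Type} [Field k] {L : Type} (J : L → Set ℝ)
    (hJ : ∀ ℓ, IsIntervalSet (J ℓ)) (V : PersMod k ℝ)
    (hV : PersIso V (dsum fun ℓ => intervalModule k ℝ (J ℓ) (hJ ℓ)))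
    (a : EReal) (b c : ℝ) (d : EReal)
    (hab : a < (b : EReal)) (hbc : b ≤ c) (hcd : (c : EReal) < d) :
    persMeasure V a b c d =
      ecard {ℓ : L // Set.Icc b c ⊆ J ℓ ∧ ∀ x ∈ J ℓ, a < (x : EReal) ∧ (x : EReal) < d} := by
  rw [hV.persMeasure_eq, persMeasure_dsum_intervalModule hab hbc hcd]
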